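/- For every integer k ≥ 1, the harmonic number H_k satisfies H_k = ∑_{i=1}^{k} (−1)^{k−i}·binom(k,i)·h_i^{(k+1)}, and moreover 1/k = ∑_{i=1}^{k} (−1)^{k−i}·binom(k,i)·h_i^{(k)}. -/

import Mathlib

/-- The hyperharmonic numbers: `hyperharmonic n 0 = 1/n`, `hyperharmonic 0 r = 0`,
and `hyperharmonic n r = ∑_{k=1}^{n} hyperharmonic k (r-1)` for `r ≥ 1`. -/
noncomputable def hyperharmonic : ℕ → ℕ → ℝ
  | n, 0 => 1 / n
  | n, (r + 1) => ∑ k ∈ Finset.Icc 1 n, hyperharmonic k r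
  termination_by n r => r

/-! The defining recursion says that the forward difference in `n` of `h_n^{(r+1)}` is
`h_{n+1}^{(r)}`; iterating, `Δ^k h^{(k+r)} = h^{(r)}(· + k)`. Since `h_0^{(r)} = 0`, evaluating at
`0` and expanding `Δ^k` as an alternating binomial sum gives
`∑_{i=1}^k (-1)^{k-i} binom(k,i) h_i^{(k+r)} = h_k^{(r)}`, and `r = 1`, `r = 0` are the two claims. -/

open Finset Function fwdDiff

-- For `r = 0` this is Lean's `1 / 0 = 0`.
@[simp]
lemma hyperharmonic_zero_left (r : ℕ) : hyperharmonic 0 r = 0 := by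
  cases r <;> simp [hyperharmonic]

lemma hyperharmonic_succ_succ (n r : ℕ) :
    hyperharmonic (n + 1) (r + 1) = hyperharmonic n (r + 1) + hyperharmonic (n + 1) r := by
  rw [hyperharmonic, hyperharmonic, sum_Icc_succ_top (Nat.le_add_left 1 n)]

lemma hyperharmonic_one (n : ℕ) : hyperharmonic n 1 = harmonic n := by
  induction n with
  | zero => simp
  | succ n ih =>
    rw [hyperharmonic_succ_succ, ih, harmonic_succ, hyperharmonic]
    push_cast
    ring

lemma fwdDiff_iter_hyperharmonic (k r : ℕ) :
    Δ_[1] ^[k] (fun n ↦ hyperharmonic n (k + r)) = fun n ↦ hyperharmonic (n + k) r := by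
  induction k generalizing r with
  | zero => simp
  | succ k ih =>
    rw [iterate_succ_apply', show k + 1 + r = k + (r + 1) by ring, ih]
    ext n
    rw [fwdDiff, add_right_comm, hyperharmonic_succ_succ, add_sub_cancel_left, add_assoc]

lemma fwdDiff_iter_apply_zero_of_map_zero {R : Type*} [Ring R] (f : ℕ → R) (hf : f 0 = 0)
    (k : ℕ) : Δ_[1] ^[k] f 0 = ∑ i ∈ Icc 1 k, (-1 : R) ^ (k - i) * (k.choose i : R) * f i := by
  rw [fwdDiff_iter_eq_sum_shift, sum_range_succ', ← Ico_add_one_right_eq_Icc,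
    sum_Ico_eq_sum_range]
  simp [hf, add_comm 1]

lemma sum_alternating_choose_hyperharmonic (k r : ℕ) :
    ∑ i ∈ Icc 1 k, (-1 : ℝ) ^ (k - i) * (k.choose i : ℝ) * hyperharmonic i (k + r) =
      hyperharmonic k r := by
  rw [← fwdDiff_iter_apply_zero_of_map_zero (fun n ↦ hyperharmonic n (k + r))
      (hyperharmonic_zero_left _), fwdDiff_iter_hyperharmonic]
  simp only [zero_add]

theorem harmonic_eq_alternating_sum_hyperharmonic_general (k : ℕ) :
    ((harmonic k : ℚ) : ℝ) =
        ∑ i ∈ Finset.Icc 1 k,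
          (-1 : ℝ) ^ (k - i) * (Nat.choose k i : ℝ) * hyperharmonic i (k + 1) ∧
      1 / (k : ℝ) =
        ∑ i ∈ Finset.Icc 1 k,
          (-1 : ℝ) ^ (k - i) * (Nat.choose k i : ℝ) * hyperharmonic i k := by
  constructor
  · rw [sum_alternating_choose_hyperharmonic k 1, hyperharmonic_one]
  · simpa only [add_zero, hyperharmonic] using (sum_alternating_choose_hyperharmonic k 0).symm

theorem harmonic_eq_alternating_sum_hyperharmonic (k : ℕ) (hk : 1 ≤ k) :
    ((harmonic k : ℚ) : ℝ) =
        ∑ i ∈ Finset.Icc 1 k,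
          (-1 : ℝ) ^ (k - i) * (Nat.choose k i : ℝ) * hyperharmonic i (k + 1) ∧
      1 / (k : ℝ) =
        ∑ i ∈ Finset.Icc 1 k,
          (-1 : ℝ) ^ (k - i) * (Nat.choose k i : ℝ) * hyperharmonic i k :=
  harmonic_eq_alternating_sum_hyperharmonic_general k
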